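/- arXiv:1203.0564 — 4 statements merged into one kernel-verified Lean document; each statement's English description precedes it below -/
import Mathlib

section
/- Let $x_1,x_2,x_3,x_4$ be an orthonormal basis of $\mathbb{R}^4$. Then for every unit simple 2-vector $\xi = y \wedge z$ with $y,z$ orthonormal vectors in $\mathbb{R}^4$, the determinant of $(x_1\wedge x_2 + x_3\wedge x_4)\wedge \xi$ with respect to the basis $x_1\wedge x_2\wedge x_3\wedge x_4$ has absolute value at most 1. -/
open scoped BigOperators
open Matrix

/-- Dot product on `ℝ⁴`. -/
def dotp (x y : Fin 4 → ℝ) : ℝ := ∑ i, x i * y i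

/-- Wedge product of two vectors of `ℝ⁴`, as an antisymmetric array of coefficients
on the basis `eᵢ ∧ eⱼ`. -/
def wedge (x y : Fin 4 → ℝ) : Fin 4 → Fin 4 → ℝ := fun i j => x i * y j - x j * y i

/-- Coefficient of the 4-form `α ∧ β` relative to `e₁ ∧ e₂ ∧ e₃ ∧ e₄`. -/
def wdet (α β : Fin 4 → Fin 4 → ℝ) : ℝ :=
  α 0 1 * β 2 3 - α 0 2 * β 1 3 + α 0 3 * β 1 2 +
  α 2 3 * β 0 1 - α 1 3 * β 0 2 + α 1 2 * β 0 3

open Matrix in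
theorem my_det_fin_four (A : Matrix (Fin 4) (Fin 4) ℝ) :
    A.det =
      A 0 0 * (A 1 1 * (A 2 2 * A 3 3 - A 2 3 * A 3 2) - A 1 2 * (A 2 1 * A 3 3 - A 2 3 * A 3 1)
        + A 1 3 * (A 2 1 * A 3 2 - A 2 2 * A 3 1))
      - A 0 1 * (A 1 0 * (A 2 2 * A 3 3 - A 2 3 * A 3 2) - A 1 2 * (A 2 0 * A 3 3 - A 2 3 * A 3 0)
        + A 1 3 * (A 2 0 * A 3 2 - A 2 2 * A 3 0))
      + A 0 2 * (A 1 0 * (A 2 1 * A 3 3 - A 2 3 * A 3 1) - A 1 1 * (A 2 0 * A 3 3 - A 2 3 * A 3 0)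
        + A 1 3 * (A 2 0 * A 3 1 - A 2 1 * A 3 0))
      - A 0 3 * (A 1 0 * (A 2 1 * A 3 2 - A 2 2 * A 3 1) - A 1 1 * (A 2 0 * A 3 2 - A 2 2 * A 3 0)
        + A 1 2 * (A 2 0 * A 3 1 - A 2 1 * A 3 0)) := by
  rw [Matrix.det_succ_row_zero]
  simp only [Fin.sum_univ_succ, Matrix.det_fin_three, Matrix.submatrix_apply, Finset.univ_unique,
    Finset.sum_singleton, Fin.default_eq_zero]
  norm_num [Fin.succAbove, Fin.lt_def, Fin.succ, Fin.castSucc, Fin.castAdd, Fin.castLE]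
  simp only [show (⟨2, by omega⟩ : Fin 4) = 2 from rfl, show (⟨3, by omega⟩ : Fin 4) = 3 from rfl]
  ring

theorem cauchy8 (a0 a1 a2 a3 b0 b1 b2 b3 : ℝ)
    (ha : a0^2 + a1^2 + a2^2 + a3^2 = 1) (hb : b0^2 + b1^2 + b2^2 + b3^2 = 1) :
    |(a2 * b3 - a3 * b2) + (a0 * b1 - a1 * b0)| ≤ 1 := by
  rw [abs_le]
  constructor <;>
    nlinarith [sq_nonneg (a1*b1 + a0*b0), sq_nonneg (a1*b2 - a3*b0),
      sq_nonneg (a1*b3 + a2*b0), sq_nonneg (a0*b2 + a3*b1), sq_nonneg (a0*b3 - a2*b1),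
      sq_nonneg (a3*b3 + a2*b2)]

theorem stmt_0 (x : Fin 4 → Fin 4 → ℝ)
    (hx : ∀ i j, dotp (x i) (x j) = if i = j then 1 else 0)
    (y z : Fin 4 → ℝ) (hy : dotp y y = 1) (hz : dotp z z = 1) (hyz : dotp y z = 0) :
    |wdet (wedge (x 0) (x 1) + wedge (x 2) (x 3)) (wedge y z) / (Matrix.of x).det| ≤ 1 := by
  -- orthogonality of rows: X * Xᵀ = 1
  have hxx : (Matrix.of x) * (Matrix.of x)ᵀ = 1 := by
    ext i j
    simpa [Matrix.mul_apply, Matrix.one_apply, dotp] using hx i j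
  have hd2 : (Matrix.of x).det * (Matrix.of x).det = 1 := by
    have h := congrArg Matrix.det hxx
    rwa [Matrix.det_mul, Matrix.det_transpose, Matrix.det_one] at h
  have habs : |(Matrix.of x).det| = 1 := by
    rcases mul_self_eq_one_iff.mp hd2 with h | h <;> simp [h]
  -- orthogonality of columns
  have hxtx : (Matrix.of x)ᵀ * (Matrix.of x) = 1 := mul_eq_one_comm.mp hxx
  have hcol : ∀ k l : Fin 4,
      x 0 k * x 0 l + x 1 k * x 1 l + x 2 k * x 2 l + x 3 k * x 3 l
        = if k = l then 1 else 0 := by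
    intro k l
    have h := congrFun (congrFun hxtx k) l
    simpa [Matrix.mul_apply, Matrix.one_apply, Fin.sum_univ_four] using h
  have h00 := hcol 0 0; rw [if_pos rfl] at h00
  have h11 := hcol 1 1; rw [if_pos rfl] at h11
  have h22 := hcol 2 2; rw [if_pos rfl] at h22
  have h33 := hcol 3 3; rw [if_pos rfl] at h33
  have h01 := hcol 0 1; rw [if_neg (by decide)] at h01
  have h02 := hcol 0 2; rw [if_neg (by decide)] at h02
  have h03 := hcol 0 3; rw [if_neg (by decide)] at h03
  have h12 := hcol 1 2; rw [if_neg (by decide)] at h12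
  have h13 := hcol 1 3; rw [if_neg (by decide)] at h13
  have h23 := hcol 2 3; rw [if_neg (by decide)] at h23
  -- splitting of the wedge determinant
  have hsplit : wdet (wedge (x 0) (x 1) + wedge (x 2) (x 3)) (wedge y z)
      = (Matrix.of ![x 0, x 1, y, z]).det + (Matrix.of ![x 2, x 3, y, z]).det := by
    simp only [my_det_fin_four, wdet, wedge, Pi.add_apply, Matrix.of_apply,
      Matrix.cons_val', Matrix.cons_val_zero, Matrix.cons_val_one, Matrix.head_cons,
      Matrix.cons_val_two, Matrix.tail_cons, Matrix.cons_val_three, Matrix.head_fin_const,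
      Matrix.cons_val_fin_one, Matrix.empty_val']
    ring
  -- Gram computations
  have hg1 : (Matrix.of ![x 0, x 1, y, z]) * (Matrix.of x)ᵀ
      = Matrix.of ![fun j => dotp (x 0) (x j), fun j => dotp (x 1) (x j),
          fun j => dotp y (x j), fun j => dotp z (x j)] := by
    ext i j
    fin_cases i <;> simp [Matrix.mul_apply, dotp]
  have hg2 : (Matrix.of ![x 2, x 3, y, z]) * (Matrix.of x)ᵀ
      = Matrix.of ![fun j => dotp (x 2) (x j), fun j => dotp (x 3) (x j),
          fun j => dotp y (x j), fun j => dotp z (x j)] := by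
    ext i j
    fin_cases i <;> simp [Matrix.mul_apply, dotp]
  have hdet1 : (Matrix.of ![x 0, x 1, y, z]).det * (Matrix.of x).det
      = dotp y (x 2) * dotp z (x 3) - dotp y (x 3) * dotp z (x 2) := by
    rw [← Matrix.det_transpose (Matrix.of x), ← Matrix.det_mul, hg1, my_det_fin_four]
    simp [hx]
  have hdet2 : (Matrix.of ![x 2, x 3, y, z]).det * (Matrix.of x).det
      = dotp y (x 0) * dotp z (x 1) - dotp y (x 1) * dotp z (x 0) := by
    rw [← Matrix.det_transpose (Matrix.of x), ← Matrix.det_mul, hg2, my_det_fin_four]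
    simp [hx]
  -- Parseval
  have hy' := hy; have hz' := hz
  simp only [dotp, Fin.sum_univ_four] at hy' hz'
  have ha : (dotp y (x 0))^2 + (dotp y (x 1))^2 + (dotp y (x 2))^2 + (dotp y (x 3))^2 = 1 := by
    simp only [dotp, Fin.sum_univ_four]
    linear_combination (y 0)^2 * h00 + (y 1)^2 * h11 + (y 2)^2 * h22 + (y 3)^2 * h33 +
      (2*y 0*y 1) * h01 + (2*y 0*y 2) * h02 + (2*y 0*y 3) * h03 +
      (2*y 1*y 2) * h12 + (2*y 1*y 3) * h13 + (2*y 2*y 3) * h23 + hy'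
  have hb : (dotp z (x 0))^2 + (dotp z (x 1))^2 + (dotp z (x 2))^2 + (dotp z (x 3))^2 = 1 := by
    simp only [dotp, Fin.sum_univ_four]
    linear_combination (z 0)^2 * h00 + (z 1)^2 * h11 + (z 2)^2 * h22 + (z 3)^2 * h33 +
      (2*z 0*z 1) * h01 + (2*z 0*z 2) * h02 + (2*z 0*z 3) * h03 +
      (2*z 1*z 2) * h12 + (2*z 1*z 3) * h13 + (2*z 2*z 3) * h23 + hz'
  have key : wdet (wedge (x 0) (x 1) + wedge (x 2) (x 3)) (wedge y z) * (Matrix.of x).det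
      = (dotp y (x 2) * dotp z (x 3) - dotp y (x 3) * dotp z (x 2))
        + (dotp y (x 0) * dotp z (x 1) - dotp y (x 1) * dotp z (x 0)) := by
    rw [hsplit, add_mul, hdet1, hdet2]
  have hp := cauchy8 (dotp y (x 0)) (dotp y (x 1)) (dotp y (x 2)) (dotp y (x 3))
    (dotp z (x 0)) (dotp z (x 1)) (dotp z (x 2)) (dotp z (x 3)) ha hb
  have hfin : |wdet (wedge (x 0) (x 1) + wedge (x 2) (x 3)) (wedge y z)| ≤ 1 := by
    have h2 : |wdet (wedge (x 0) (x 1) + wedge (x 2) (x 3)) (wedge y z)|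
        * |(Matrix.of x).det| ≤ 1 := by
      rw [← abs_mul, key]; exact hp
    rwa [habs, mul_one] at h2
  rw [abs_div, habs, div_one]
  exact hfin
end

section
/- Let $y,z$ be orthonormal vectors in $\mathbb{R}^4$ with coordinates $y=(A,B,C,D)$ and $z=(a,b,c,d)$. Then $|(Ab-aB)+(Cd-cD)| \le 1$ and $|(Ab-aB)-(Cd-cD)| \le 1$. -/
theorem stmt_1 (A B C D a b c d : ℝ)
    (hy : A ^ 2 + B ^ 2 + C ^ 2 + D ^ 2 = 1)
    (hz : a ^ 2 + b ^ 2 + c ^ 2 + d ^ 2 = 1)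
    (hyz : A * a + B * b + C * c + D * d = 0) :
    |(A * b - a * B) + (C * d - c * D)| ≤ 1 ∧
    |(A * b - a * B) - (C * d - c * D)| ≤ 1 := by
  constructor <;> rw [abs_le] <;> constructor <;>
    nlinarith [sq_nonneg (A - b), sq_nonneg (A + b), sq_nonneg (a + B), sq_nonneg (a - B),
      sq_nonneg (C - d), sq_nonneg (C + d), sq_nonneg (c + D), sq_nonneg (c - D)]
end

section
/- Let $w_1,w_2,w_3$ be unit vectors in $\mathbb{R}^2_1 \subset \mathbb{R}^4$ with $w_1+w_2+w_3=0$, and $u_1,u_2,u_3$ unit vectors in the orthogonal plane $\mathbb{R}^2_2$ with $u_1+u_2+u_3=0$. Set $v_{jl} = w_j\wedge u_l$. Then for every choice of signs $\epsilon(j,l)\in\{1,-1\}$ for $1\le j,l\le 2$, the 2-vector $\sum_{1\le j,l\le 2}\epsilon(j,l) v_{jl}$ satisfies $\|\sum_{1\le j,l\le 2}\epsilon(j,l)v_{jl}\| \le 3$, where $\|\alpha\| = \sup\{|\det(\alpha\wedge\beta)|:\beta \text{ unit simple 2-vector}\}$. -/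
open scoped BigOperators

/-- `β` is a unit simple 2-vector. -/
def IsUnitSimple (β : Fin 4 → Fin 4 → ℝ) : Prop :=
  ∃ y z : Fin 4 → ℝ, dotp y y = 1 ∧ dotp z z = 1 ∧ dotp y z = 0 ∧ β = wedge y z

/-- Tight frame inequality for three unit vectors at 120 degrees. -/
lemma frame_ineq (a0 b0 a1 b1 x y : ℝ) (h0 : a0^2 + b0^2 = 1) (h1 : a1^2 + b1^2 = 1)
    (h01 : a0*a1 + b0*b1 = -(1/2)) :
    (x*b0 - y*a0)^2 + (x*b1 - y*a1)^2 ≤ 3/2 * (x^2 + y^2) := by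
  have key : (x*b0 - y*a0)^2 + (x*b1 - y*a1)^2
      = 3/2 * (x^2 + y^2) - (x*(b0+b1) - y*(a0+a1))^2 := by
    linear_combination (x^2*(1+a1^2-b1^2) + y^2*(1-a1^2+b1^2) + 4*x*y*a1*b1) * h0
      + (x^2*(1+a0^2-b0^2) + y^2*(1-a0^2+b0^2) + 4*x*y*a0*b0) * h1
      + (x^2*(1-2*(a0*a1-b0*b1)) + y^2*(1+2*(a0*a1-b0*b1)) - 4*x*y*(a0*b1+a1*b0)) * h01
  nlinarith [sq_nonneg (x*(b0+b1) - y*(a0+a1))]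

set_option maxHeartbeats 1000000 in
lemma sub_ineq (u v s t p0 p1 q0 q1 A B : ℝ)
    (hu : u = 1 ∨ u = -1) (hv : v = 1 ∨ v = -1) (hs : s = 1 ∨ s = -1) (ht : t = 1 ∨ t = -1)
    (hA : 0 ≤ A) (hB : 0 ≤ B)
    (hp : p0^2 + p1^2 ≤ 3/2 * A) (hq : q0^2 + q1^2 ≤ 3/2 * B) :
    (u*(p0*q0) + v*(p0*q1) + s*(p1*q0) + t*(p1*q1))^2 ≤ 9 * (A*B) := by
  have hU : (u*q0 + v*q1)^2 ≤ 2*(q0^2 + q1^2) := by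
    rcases hu with rfl | rfl <;> rcases hv with rfl | rfl <;>
      nlinarith [sq_nonneg (q0 - q1), sq_nonneg (q0 + q1)]
  have hV : (s*q0 + t*q1)^2 ≤ 2*(q0^2 + q1^2) := by
    rcases hs with rfl | rfl <;> rcases ht with rfl | rfl <;>
      nlinarith [sq_nonneg (q0 - q1), sq_nonneg (q0 + q1)]
  have hUV : (u*q0 + v*q1)^2 + (s*q0 + t*q1)^2 ≤ 6*B := by nlinarith
  have cauchy : (p0*(u*q0+v*q1) + p1*(s*q0+t*q1))^2
      ≤ (p0^2 + p1^2) * ((u*q0+v*q1)^2 + (s*q0+t*q1)^2) := by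
    nlinarith [sq_nonneg (p0*(s*q0+t*q1) - p1*(u*q0+v*q1))]
  have hmul : (p0^2 + p1^2) * ((u*q0+v*q1)^2 + (s*q0+t*q1)^2) ≤ (3/2*A) * (6*B) :=
    mul_le_mul hp hUV (by positivity) (by linarith)
  have hT : (u*(p0*q0) + v*(p0*q1) + s*(p1*q0) + t*(p1*q1))
      = p0*(u*q0+v*q1) + p1*(s*q0+t*q1) := by ring
  rw [hT]
  nlinarith [cauchy, hmul]

set_option maxHeartbeats 1000000 in
lemma key_ineq (e00 e01 e10 e11 P0 P1 Q0 Q1 R0 R1 S0 S1 a b c d : ℝ)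
    (h00 : e00 = 1 ∨ e00 = -1) (h01 : e01 = 1 ∨ e01 = -1)
    (h10 : e10 = 1 ∨ e10 = -1) (h11 : e11 = 1 ∨ e11 = -1)
    (ha : 0 ≤ a) (hb : 0 ≤ b) (hc : 0 ≤ c) (hd : 0 ≤ d)
    (had : a + d = 1) (hbc : b + c = 1)
    (hP : P0^2 + P1^2 ≤ 3/2 * a) (hQ : Q0^2 + Q1^2 ≤ 3/2 * b)
    (hR : R0^2 + R1^2 ≤ 3/2 * c) (hS : S0^2 + S1^2 ≤ 3/2 * d) :
    |e00*(P0*Q0 - R0*S0) + e01*(P0*Q1 - R0*S1) + e10*(P1*Q0 - R1*S0)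
      + e11*(P1*Q1 - R1*S1)| ≤ 3 := by
  have ht1 : (e00*(P0*Q0) + e01*(P0*Q1) + e10*(P1*Q0) + e11*(P1*Q1))^2 ≤ 9 * (a*b) :=
    sub_ineq e00 e01 e10 e11 P0 P1 Q0 Q1 a b h00 h01 h10 h11 ha hb hP hQ
  have ht2 : (e00*(R0*S0) + e01*(R0*S1) + e10*(R1*S0) + e11*(R1*S1))^2 ≤ 9 * (c*d) :=
    sub_ineq e00 e01 e10 e11 R0 R1 S0 S1 c d h00 h01 h10 h11 hc hd hR hS
  set T1 : ℝ := e00*(P0*Q0) + e01*(P0*Q1) + e10*(P1*Q0) + e11*(P1*Q1) with hT1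
  set T2 : ℝ := e00*(R0*S0) + e01*(R0*S1) + e10*(R1*S0) + e11*(R1*S1) with hT2
  have hprod : T1^2 * T2^2 ≤ 81 * ((a*b) * (c*d)) := by
    have h2 : 0 ≤ 9 * (a*b) := by positivity
    calc T1^2 * T2^2 ≤ (9*(a*b)) * (9*(c*d)) :=
          mul_le_mul ht1 ht2 (sq_nonneg _) h2
      _ = 81 * ((a*b) * (c*d)) := by ring
  have habs : |2*T1*T2| ≤ 9*(a*c + b*d) := by
    have h9 : 0 ≤ 9*(a*c + b*d) := by positivity
    have hsq : (2*T1*T2)^2 ≤ (9*(a*c + b*d))^2 := by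
      nlinarith [hprod, sq_nonneg (a*c - b*d)]
    nlinarith [sq_abs (2*T1*T2), abs_nonneg (2*T1*T2)]
  have hone : (a+d)*(b+c) = 1 := by rw [had, hbc]; norm_num
  have hX : (T1 - T2)^2 ≤ 9 := by
    have h1 : -(9*(a*c+b*d)) ≤ 2*T1*T2 := by
      have := neg_abs_le (2*T1*T2); linarith
    nlinarith [ht1, ht2]
  have hgoal : |T1 - T2| ≤ 3 := by
    nlinarith [sq_abs (T1 - T2), abs_nonneg (T1 - T2)]
  have hE : e00*(P0*Q0 - R0*S0) + e01*(P0*Q1 - R0*S1) + e10*(P1*Q0 - R1*S0)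
      + e11*(P1*Q1 - R1*S1) = T1 - T2 := by rw [hT1, hT2]; ring
  rw [hE]; exact hgoal

theorem stmt_5 (w u : Fin 3 → Fin 4 → ℝ)
    (hwplane : ∀ j, w j 2 = 0 ∧ w j 3 = 0)
    (huplane : ∀ l, u l 0 = 0 ∧ u l 1 = 0)
    (hwunit : ∀ j, dotp (w j) (w j) = 1)
    (huunit : ∀ l, dotp (u l) (u l) = 1)
    (hwsum : w 0 + w 1 + w 2 = 0) (husum : u 0 + u 1 + u 2 = 0)
    (ε : Fin 2 → Fin 2 → ℝ) (hε : ∀ j l, ε j l = 1 ∨ ε j l = -1) :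
    ∀ β : Fin 4 → Fin 4 → ℝ, IsUnitSimple β →
      |wdet (ε 0 0 • wedge (w 0) (u 0) + ε 0 1 • wedge (w 0) (u 1) +
             ε 1 0 • wedge (w 1) (u 0) + ε 1 1 • wedge (w 1) (u 1)) β| ≤ 3 := by
  rintro β ⟨y, z, hy, hz, hyz, rfl⟩
  obtain ⟨hp0, hp0'⟩ := hwplane 0
  obtain ⟨hp1, hp1'⟩ := hwplane 1
  obtain ⟨hq0, hq0'⟩ := huplane 0
  obtain ⟨hq1, hq1'⟩ := huplane 1
  have hw0 : w 0 0 ^ 2 + w 0 1 ^ 2 = 1 := by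
    have := hwunit 0; simp [dotp, Fin.sum_univ_four, hp0, hp0'] at this
    linear_combination this
  have hw1 : w 1 0 ^ 2 + w 1 1 ^ 2 = 1 := by
    have := hwunit 1; simp [dotp, Fin.sum_univ_four, hp1, hp1'] at this
    linear_combination this
  have hw01 : w 0 0 * w 1 0 + w 0 1 * w 1 1 = -(1/2) := by
    have h2 := hwunit 2
    have e0 : w 2 0 = -(w 0 0 + w 1 0) := by
      have := congrFun hwsum 0; simp at this; linarith
    have e1 : w 2 1 = -(w 0 1 + w 1 1) := by
      have := congrFun hwsum 1; simp at this; linarith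
    obtain ⟨hp2, hp2'⟩ := hwplane 2
    simp [dotp, Fin.sum_univ_four, e0, e1, hp2, hp2'] at h2
    linear_combination (1/2) * h2 - (1/2) * hw0 - (1/2) * hw1
  have hu0 : u 0 3 ^ 2 + u 0 2 ^ 2 = 1 := by
    have := huunit 0; simp [dotp, Fin.sum_univ_four, hq0, hq0'] at this
    linear_combination this
  have hu1 : u 1 3 ^ 2 + u 1 2 ^ 2 = 1 := by
    have := huunit 1; simp [dotp, Fin.sum_univ_four, hq1, hq1'] at this
    linear_combination this
  have hu01 : u 0 3 * u 1 3 + u 0 2 * u 1 2 = -(1/2) := by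
    have h2 := huunit 2
    have e2 : u 2 2 = -(u 0 2 + u 1 2) := by
      have := congrFun husum 2; simp at this; linarith
    have e3 : u 2 3 = -(u 0 3 + u 1 3) := by
      have := congrFun husum 3; simp at this; linarith
    obtain ⟨hq2, hq2'⟩ := huplane 2
    simp [dotp, Fin.sum_univ_four, e2, e3, hq2, hq2'] at h2
    linear_combination (1/2) * h2 - (1/2) * hu0 - (1/2) * hu1
  have hyn : y 0 ^ 2 + y 1 ^ 2 + (y 2 ^ 2 + y 3 ^ 2) = 1 := by
    simp [dotp, Fin.sum_univ_four] at hy; linear_combination hy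
  have hzn : z 3 ^ 2 + z 2 ^ 2 + (z 0 ^ 2 + z 1 ^ 2) = 1 := by
    simp [dotp, Fin.sum_univ_four] at hz; linear_combination hz
  have hE : wdet (ε 0 0 • wedge (w 0) (u 0) + ε 0 1 • wedge (w 0) (u 1) +
             ε 1 0 • wedge (w 1) (u 0) + ε 1 1 • wedge (w 1) (u 1)) (wedge y z)
      = ε 0 0 * ((y 0 * w 0 1 - y 1 * w 0 0) * (z 3 * u 0 2 - z 2 * u 0 3)
            - (z 0 * w 0 1 - z 1 * w 0 0) * (y 3 * u 0 2 - y 2 * u 0 3))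
        + ε 0 1 * ((y 0 * w 0 1 - y 1 * w 0 0) * (z 3 * u 1 2 - z 2 * u 1 3)
            - (z 0 * w 0 1 - z 1 * w 0 0) * (y 3 * u 1 2 - y 2 * u 1 3))
        + ε 1 0 * ((y 0 * w 1 1 - y 1 * w 1 0) * (z 3 * u 0 2 - z 2 * u 0 3)
            - (z 0 * w 1 1 - z 1 * w 1 0) * (y 3 * u 0 2 - y 2 * u 0 3))
        + ε 1 1 * ((y 0 * w 1 1 - y 1 * w 1 0) * (z 3 * u 1 2 - z 2 * u 1 3)
            - (z 0 * w 1 1 - z 1 * w 1 0) * (y 3 * u 1 2 - y 2 * u 1 3)) := by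
    simp only [wdet, wedge, Pi.add_apply, Pi.smul_apply, smul_eq_mul,
      hp0, hp0', hp1, hp1', hq0, hq0', hq1, hq1']
    ring
  rw [hE]
  exact key_ineq (ε 0 0) (ε 0 1) (ε 1 0) (ε 1 1) _ _ _ _ _ _ _ _
    (y 0 ^ 2 + y 1 ^ 2) (z 3 ^ 2 + z 2 ^ 2) (z 0 ^ 2 + z 1 ^ 2) (y 2 ^ 2 + y 3 ^ 2)
    (hε 0 0) (hε 0 1) (hε 1 0) (hε 1 1)
    (by positivity) (by positivity) (by positivity) (by positivity)
    hyn hzn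
    (frame_ineq (w 0 0) (w 0 1) (w 1 0) (w 1 1) (y 0) (y 1) hw0 hw1 hw01)
    (by
      have := frame_ineq (u 0 3) (u 0 2) (u 1 3) (u 1 2) (z 3) (z 2) hu0 hu1 hu01
      linarith)
    (frame_ineq (w 0 0) (w 0 1) (w 1 0) (w 1 1) (z 0) (z 1) hw0 hw1 hw01)
    (by
      have := frame_ineq (u 0 3) (u 0 2) (u 1 3) (u 1 2) (y 3) (y 2) hu0 hu1 hu01
      linarith)
end

section
/- With notation as in the calibration lemma ($w_j$, $u_l$ unit vectors in orthogonal planes of $\mathbb{R}^4$, each triple summing to zero, $v_{jl}=w_j\wedge u_l$), for every choice of signs $\epsilon(j,l)\in\{\pm1\}$ defined on the six off-diagonal indices $\{(j,l): 1\le j,l\le 3, j\ne l\}$, we have $\left\|\sum_{j\ne l}\epsilon(j,l)v_{jl}\right\| \le 3$. -/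
open scoped BigOperators

/-- cross product against the first-plane coordinates -/
def Aj (w : Fin 3 → Fin 4 → ℝ) (y : Fin 4 → ℝ) (j : Fin 3) : ℝ :=
  w j 0 * y 1 - w j 1 * y 0

/-- cross product against the second-plane coordinates -/
def Cl (u : Fin 3 → Fin 4 → ℝ) (y : Fin 4 → ℝ) (l : Fin 3) : ℝ :=
  u l 3 * y 2 - u l 2 * y 3

lemma pair_bound (A B C D : ℝ) :
    |A * D - B * C| ≤ Real.sqrt (A ^ 2 + B ^ 2) * Real.sqrt (C ^ 2 + D ^ 2) := by
  rw [← Real.sqrt_mul (by positivity), ← Real.sqrt_sq_eq_abs]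
  apply Real.sqrt_le_sqrt
  nlinarith [sq_nonneg (A * C + B * D)]

lemma side (c s c' s' c'' s'' p q : ℝ)
    (h1 : c ^ 2 + s ^ 2 = 1) (h2 : c' ^ 2 + s' ^ 2 = 1) (h3 : c'' ^ 2 + s'' ^ 2 = 1)
    (hc : c + c' + c'' = 0) (hs : s + s' + s'' = 0) :
    (c * q - s * p) ^ 2 + (c' * q - s' * p) ^ 2 + (c'' * q - s'' * p) ^ 2
      = 3 / 2 * (p ^ 2 + q ^ 2) := by
  have hc2 : c'' = -c - c' := by linarith
  have hs2 : s'' = -s - s' := by linarith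
  subst hc2 hs2
  have hdot : c * c' + s * s' = -1 / 2 := by linear_combination (h3 - h1 - h2) / 2
  obtain ⟨d, hD⟩ : ∃ d, c * s' - c' * s = d := ⟨_, rfl⟩
  have hd : d ^ 2 = 3 / 4 := by
    rw [← hD]
    linear_combination (c' ^ 2 + s' ^ 2) * h1 + h2 + (1 / 2 - c * c' - s * s') * hdot
  have hc' : c' = -c / 2 - s * d := by
    rw [← hD]; linear_combination c * hdot - c' * h1
  have hs' : s' = -s / 2 + c * d := by
    rw [← hD]; linear_combination s * hdot - s' * h1
  subst hc' hs'
  linear_combination (3 / 2 * (p ^ 2 + q ^ 2)) * h1 + (2 * (s * q + c * p) ^ 2) * hd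

lemma sum6 (m0 m1 m2 n0 n1 n2 : ℝ)
    (h : m0 ^ 2 + m1 ^ 2 + m2 ^ 2 + n0 ^ 2 + n1 ^ 2 + n2 ^ 2 = 3) :
    m0 * n1 + m0 * n2 + m1 * n0 + m1 * n2 + m2 * n0 + m2 * n1 ≤ 3 := by
  nlinarith [sq_nonneg (m0 - n1), sq_nonneg (m0 - n2), sq_nonneg (m1 - n0),
    sq_nonneg (m1 - n2), sq_nonneg (m2 - n0), sq_nonneg (m2 - n1)]

theorem stmt_8 (w u : Fin 3 → Fin 4 → ℝ)
    (hwplane : ∀ j, w j 2 = 0 ∧ w j 3 = 0)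
    (huplane : ∀ l, u l 0 = 0 ∧ u l 1 = 0)
    (hwunit : ∀ j, dotp (w j) (w j) = 1)
    (huunit : ∀ l, dotp (u l) (u l) = 1)
    (hwsum : w 0 + w 1 + w 2 = 0) (husum : u 0 + u 1 + u 2 = 0)
    (ε : Fin 3 → Fin 3 → ℝ) (hε : ∀ j l, j ≠ l → ε j l = 1 ∨ ε j l = -1) :
    ∀ β : Fin 4 → Fin 4 → ℝ, IsUnitSimple β →
      |wdet (∑ j : Fin 3, ∑ l : Fin 3,
        (if j ≠ l then ε j l else 0) • wedge (w j) (u l)) β| ≤ 3 := by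
  rintro β ⟨y, z, hy, hz, -, rfl⟩
  -- scalar facts
  have hysq : y 0 ^ 2 + y 1 ^ 2 + y 2 ^ 2 + y 3 ^ 2 = 1 := by
    have := hy; simp only [dotp, Fin.sum_univ_four] at this; linear_combination this
  have hzsq : z 0 ^ 2 + z 1 ^ 2 + z 2 ^ 2 + z 3 ^ 2 = 1 := by
    have := hz; simp only [dotp, Fin.sum_univ_four] at this; linear_combination this
  have hwu : ∀ j, (w j 0) ^ 2 + (w j 1) ^ 2 = 1 := by
    intro j
    have h := hwunit j
    simp only [dotp, Fin.sum_univ_four, (hwplane j).1, (hwplane j).2] at h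
    linear_combination h
  have huu : ∀ l, (u l 3) ^ 2 + (u l 2) ^ 2 = 1 := by
    intro l
    have h := huunit l
    simp only [dotp, Fin.sum_univ_four, (huplane l).1, (huplane l).2] at h
    linear_combination h
  have hw0 : w 0 0 + w 1 0 + w 2 0 = 0 := by simpa using congrFun hwsum 0
  have hw1 : w 0 1 + w 1 1 + w 2 1 = 0 := by simpa using congrFun hwsum 1
  have hu2 : u 0 2 + u 1 2 + u 2 2 = 0 := by simpa using congrFun husum 2
  have hu3 : u 0 3 + u 1 3 + u 2 3 = 0 := by simpa using congrFun husum 3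
  -- aggregate identities
  have sideA : (Aj w y 0) ^ 2 + (Aj w y 1) ^ 2 + (Aj w y 2) ^ 2
      = 3 / 2 * ((y 0) ^ 2 + (y 1) ^ 2) :=
    side (w 0 0) (w 0 1) (w 1 0) (w 1 1) (w 2 0) (w 2 1) (y 0) (y 1)
      (hwu 0) (hwu 1) (hwu 2) hw0 hw1
  have sideB : (Aj w z 0) ^ 2 + (Aj w z 1) ^ 2 + (Aj w z 2) ^ 2
      = 3 / 2 * ((z 0) ^ 2 + (z 1) ^ 2) :=
    side (w 0 0) (w 0 1) (w 1 0) (w 1 1) (w 2 0) (w 2 1) (z 0) (z 1)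
      (hwu 0) (hwu 1) (hwu 2) hw0 hw1
  have sideC : (Cl u y 0) ^ 2 + (Cl u y 1) ^ 2 + (Cl u y 2) ^ 2
      = 3 / 2 * ((y 3) ^ 2 + (y 2) ^ 2) :=
    side (u 0 3) (u 0 2) (u 1 3) (u 1 2) (u 2 3) (u 2 2) (y 3) (y 2)
      (huu 0) (huu 1) (huu 2) hu3 hu2
  have sideD : (Cl u z 0) ^ 2 + (Cl u z 1) ^ 2 + (Cl u z 2) ^ 2
      = 3 / 2 * ((z 3) ^ 2 + (z 2) ^ 2) :=
    side (u 0 3) (u 0 2) (u 1 3) (u 1 2) (u 2 3) (u 2 2) (z 3) (z 2)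
      (huu 0) (huu 1) (huu 2) hu3 hu2
  -- the square roots
  have hmsq : ∀ j : Fin 3,
      (Real.sqrt ((Aj w y j) ^ 2 + (Aj w z j) ^ 2)) ^ 2 = (Aj w y j) ^ 2 + (Aj w z j) ^ 2 :=
    fun j => Real.sq_sqrt (by positivity)
  have hnsq : ∀ l : Fin 3,
      (Real.sqrt ((Cl u y l) ^ 2 + (Cl u z l) ^ 2)) ^ 2 = (Cl u y l) ^ 2 + (Cl u z l) ^ 2 :=
    fun l => Real.sq_sqrt (by positivity)
  -- key rewriting of the wdet
  have key : wdet (∑ j : Fin 3, ∑ l : Fin 3,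
        (if j ≠ l then ε j l else 0) • wedge (w j) (u l)) (wedge y z)
      = ε 0 1 * (Aj w y 0 * Cl u z 1 - Aj w z 0 * Cl u y 1)
      + ε 0 2 * (Aj w y 0 * Cl u z 2 - Aj w z 0 * Cl u y 2)
      + ε 1 0 * (Aj w y 1 * Cl u z 0 - Aj w z 1 * Cl u y 0)
      + ε 1 2 * (Aj w y 1 * Cl u z 2 - Aj w z 1 * Cl u y 2)
      + ε 2 0 * (Aj w y 2 * Cl u z 0 - Aj w z 2 * Cl u y 0)
      + ε 2 1 * (Aj w y 2 * Cl u z 1 - Aj w z 2 * Cl u y 1) := by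
    simp only [wdet, Finset.sum_apply, Fin.sum_univ_three, Pi.smul_apply,
      Pi.add_apply, smul_eq_mul, ne_eq, Fin.reduceEq, not_false_eq_true,
      not_true_eq_false, ite_true, ite_false, if_true, if_false]
    simp only [wedge, Aj, Cl, (hwplane 0).1, (hwplane 0).2, (hwplane 1).1, (hwplane 1).2,
      (hwplane 2).1, (hwplane 2).2, (huplane 0).1, (huplane 0).2,
      (huplane 1).1, (huplane 1).2, (huplane 2).1, (huplane 2).2, mul_zero, zero_mul, sub_zero, zero_sub, mul_one, one_mul]
    ring
  -- per-term bounds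
  have bound : ∀ j l : Fin 3, j ≠ l →
      |ε j l * (Aj w y j * Cl u z l - Aj w z j * Cl u y l)|
        ≤ Real.sqrt ((Aj w y j) ^ 2 + (Aj w z j) ^ 2)
          * Real.sqrt ((Cl u y l) ^ 2 + (Cl u z l) ^ 2) := by
    intro j l h
    have habs1 : |ε j l| = 1 := by rcases hε j l h with h' | h' <;> simp [h']
    rw [abs_mul, habs1, one_mul]
    exact pair_bound _ _ _ _
  have b01 := abs_le.mp (bound 0 1 (by decide))
  have b02 := abs_le.mp (bound 0 2 (by decide))
  have b10 := abs_le.mp (bound 1 0 (by decide))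
  have b12 := abs_le.mp (bound 1 2 (by decide))
  have b20 := abs_le.mp (bound 2 0 (by decide))
  have b21 := abs_le.mp (bound 2 1 (by decide))
  -- sum of products of sqrts is at most 3
  have hmn : Real.sqrt ((Aj w y 0) ^ 2 + (Aj w z 0) ^ 2) * Real.sqrt ((Cl u y 1) ^ 2 + (Cl u z 1) ^ 2)
      + Real.sqrt ((Aj w y 0) ^ 2 + (Aj w z 0) ^ 2) * Real.sqrt ((Cl u y 2) ^ 2 + (Cl u z 2) ^ 2)
      + Real.sqrt ((Aj w y 1) ^ 2 + (Aj w z 1) ^ 2) * Real.sqrt ((Cl u y 0) ^ 2 + (Cl u z 0) ^ 2)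
      + Real.sqrt ((Aj w y 1) ^ 2 + (Aj w z 1) ^ 2) * Real.sqrt ((Cl u y 2) ^ 2 + (Cl u z 2) ^ 2)
      + Real.sqrt ((Aj w y 2) ^ 2 + (Aj w z 2) ^ 2) * Real.sqrt ((Cl u y 0) ^ 2 + (Cl u z 0) ^ 2)
      + Real.sqrt ((Aj w y 2) ^ 2 + (Aj w z 2) ^ 2) * Real.sqrt ((Cl u y 1) ^ 2 + (Cl u z 1) ^ 2)
      ≤ 3 := by
    apply sum6
    linear_combination hmsq 0 + hmsq 1 + hmsq 2 + hnsq 0 + hnsq 1 + hnsq 2 +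
      sideA + sideB + sideC + sideD + 3 / 2 * hysq + 3 / 2 * hzsq
  rw [key, abs_le]
  constructor
  · linarith [b01.1, b02.1, b10.1, b12.1, b20.1, b21.1, hmn]
  · linarith [b01.2, b02.2, b10.2, b12.2, b20.2, b21.2, hmn]
end
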